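/- A 2×(m+1) matrix A with entries in {±1,…,±n} and distinct columns is invalid if and only if (1) one of its rows contains both α and −α for some α ∈ {1,…,n}, or (2) A contains a circuit or an anti-circuit. -/

import Mathlib

/-- The vector in `ℝⁿ` corresponding to an entry `a = s·I` with `s ∈ {±1}`,
`I ∈ {1,…,n}`: the signed standard basis vector `s • e_I`. -/
def entryVec (n : ℕ) (a : ℤ) : EuclideanSpace ℝ (Fin n) :=
  WithLp.toLp 2 (fun i : Fin n => if ((i : ℕ) : ℤ) + 1 = a then 1 else if ((i : ℕ) : ℤ) + 1 = -a then -1 else 0)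

/-- The `j`-th column of the induced matrix `M(A,b)` of a `2 × (m+1)` matrix `A` with
entries in `{±1,…,±n}` and `b ∈ ℝ²`. -/
noncomputable def inducedCol (n m : ℕ) (A : Fin 2 → Fin (m + 1) → ℤ) (b : Fin 2 → ℝ) :
    Fin (m + 1) → EuclideanSpace ℝ (Fin n) :=
  fun j => b 0 • entryVec n (A 0 j) + b 1 • entryVec n (A 1 j)

/-- `A` is valid if for every nonzero `b ∈ ℝ²` the convex hull of the columns of the
induced matrix `M(A,b)` does not contain the origin. -/
def IsValid (n m : ℕ) (A : Fin 2 → Fin (m + 1) → ℤ) : Prop :=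
  ∀ b : Fin 2 → ℝ, b ≠ 0 →
    (0 : EuclideanSpace ℝ (Fin n)) ∉ convexHull ℝ (Set.range (inducedCol n m A b))

/-- A circuit in a `k × (m+1)` matrix: distinct rows `i₀, i₁` and distinct columns
`j₁,…,j_p` with `a_{i₁,j_α} = a_{i₀,j_{α+1}}` cyclically. -/
def HasCircuit {k m : ℕ} (A : Fin k → Fin (m + 1) → ℤ) : Prop :=
  ∃ i₀ i₁ : Fin k, i₀ ≠ i₁ ∧ ∃ p : ℕ, ∃ j : Fin (p + 1) → Fin (m + 1),
    Function.Injective j ∧ ∀ α, A i₁ (j α) = A i₀ (j (α + 1))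

/-- An anti-circuit: as a circuit, but with `a_{i₁,j_α} = −a_{i₀,j_{α+1}}` cyclically. -/
def HasAntiCircuit {k m : ℕ} (A : Fin k → Fin (m + 1) → ℤ) : Prop :=
  ∃ i₀ i₁ : Fin k, i₀ ≠ i₁ ∧ ∃ p : ℕ, ∃ j : Fin (p + 1) → Fin (m + 1),
    Function.Injective j ∧ ∀ α, A i₁ (j α) = -(A i₀ (j (α + 1)))

/-!
If no row of `A` contains a pair `a, -a`, then in row `i` all entries of absolute value `I + 1`
are equal, so for weights `μ ≥ 0` the `I`-th coordinate of `∑ⱼ μⱼ M(A,b)ⱼ` is `b₀ c₀ + b₁ c₁`,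
where `cᵢ` has the sign of those entries and is nonzero once one of them sits in a column of
positive weight. So if the combination vanishes, each column `j` of positive weight has a partner
`j'` of positive weight with `A₀ⱼ' = ε A₁ⱼ`, where `ε = -sign (b₀ b₁)` does not depend on `j`;
following partners inside the finite support closes a cycle, which is a circuit (`ε = 1`) or an
anti-circuit (`ε = -1`). Conversely, a pair `a, -a` in row `i` makes two columns of `M(A, eᵢ)`
opposite, and along a circuit (anti-circuit) the columns of `M(A, (1, ∓1))` telescope to zero.
-/

open Function Set

theorem exists_injective_cycle {α : Type*} [Finite α] {P : α → Prop} {R : α → α → Prop}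
    (h : ∀ x, P x → ∃ y, P y ∧ R x y) {x₀ : α} (hx₀ : P x₀) :
    ∃ p : ℕ, ∃ j : Fin (p + 1) → α, Injective j ∧ ∀ k, R (j k) (j (k + 1)) := by
  choose! F hFP hFR using h
  have hP : ∀ k, P (F^[k] x₀) := fun k => by
    induction k with
    | zero => exact hx₀
    | succ k ih => rw [iterate_succ_apply']; exact hFP _ ih
  obtain ⟨k, l, hkl, heq⟩ := Finite.exists_ne_map_eq_of_infinite fun k => F^[k] x₀
  wlog hlt : k < l generalizing k l
  · exact this l k hkl.symm heq.symm (hkl.lt_or_gt.resolve_left hlt)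
  set y := F^[k] x₀
  have hy : y ∈ periodicPts F := mk_mem_periodicPts (n := l - k) (by omega) <| by
    rw [IsPeriodicPt, IsFixedPt, ← iterate_add_apply, Nat.sub_add_cancel hlt.le]
    exact heq.symm
  obtain ⟨p, hp⟩ := Nat.exists_eq_succ_of_ne_zero (minimalPeriod_pos_of_mem_periodicPts hy).ne'
  have hlt_period (i : Fin (p + 1)) : (i : ℕ) ∈ Iio (minimalPeriod F y) := by
    rw [mem_Iio, hp]
    exact i.isLt
  have hval (i : Fin (p + 1)) : ((i + 1 : Fin (p + 1)) : ℕ) = (i + 1) % minimalPeriod F y := by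
    rw [hp, Fin.val_add, Fin.coe_ofNat_eq_mod, Nat.add_mod_mod]
  refine ⟨p, fun i => F^[i] y, fun i i' hii' => Fin.ext ?_, fun i => ?_⟩
  · exact iterate_injOn_Iio_minimalPeriod (hlt_period i) (hlt_period i') hii'
  · simp only [hval, iterate_mod_minimalPeriod_eq, iterate_succ_apply']
    exact hFR _ (by rw [← iterate_add_apply]; exact hP _)

theorem zero_mem_convexHull_range_of_sum_eq_zero {𝕜 E ι : Type*} [Field 𝕜] [LinearOrder 𝕜]
    [IsStrictOrderedRing 𝕜] [AddCommGroup E] [Module 𝕜 E] [Fintype ι] [Nonempty ι]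
    {v : ι → E} (h : ∑ i, v i = 0) : (0 : E) ∈ convexHull 𝕜 (range v) := by
  have hmem := (convex_convexHull 𝕜 (range v)).sum_mem (t := Finset.univ)
    (w := fun _ => (Fintype.card ι : 𝕜)⁻¹) (fun _ _ => by positivity)
    (by simp) (fun i _ => subset_convexHull 𝕜 _ (mem_range_self i))
  rwa [← Finset.smul_sum, h, smul_zero] at hmem

theorem exists_weights_of_mem_convexHull_range {𝕜 E ι : Type*} [Field 𝕜] [LinearOrder 𝕜]
    [IsStrictOrderedRing 𝕜] [AddCommGroup E] [Module 𝕜 E] [Fintype ι]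
    {v : ι → E} {x : E} (hx : x ∈ convexHull 𝕜 (range v)) :
    ∃ μ : ι → 𝕜, 0 ≤ μ ∧ ∑ i, μ i = 1 ∧ ∑ i, μ i • v i = x := by
  classical
  rw [convexHull_range_eq_exists_affineCombination] at hx
  obtain ⟨s, w, hw₀, hw₁, rfl⟩ := hx
  refine ⟨fun i => if i ∈ s then w i else 0, fun i => ?_, ?_, ?_⟩
  · by_cases hi : i ∈ s <;> simp [hi, hw₀]
  · simpa [Finset.sum_ite_mem] using hw₁
  · simp [s.affineCombination_eq_linear_combination v w hw₁, ite_smul, Finset.sum_ite_mem]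

section entryVec

variable {n : ℕ}

theorem entryVec_neg (a : ℤ) : entryVec n (-a) = -entryVec n a := by
  ext I
  simp only [entryVec, PiLp.neg_apply, neg_neg]
  split_ifs <;> first | omega | norm_num

theorem entryVec_apply_eq_zero {a : ℤ} {I : Fin n} (hI : ((I : ℕ) : ℤ) + 1 ≠ |a|) :
    entryVec n a I = 0 := by
  obtain ⟨h, ha⟩ | ⟨h, ha⟩ := abs_cases a <;> rw [h] at hI <;>
    simp only [entryVec, PiLp.toLp_apply] <;> split_ifs <;> first | rfl | omega

theorem eq_or_eq_neg_of_add_one_eq_abs {a : ℤ} {I : ℕ} (hI : (I : ℤ) + 1 = |a|) :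
    a = I + 1 ∨ a = -(I + 1) := by
  rcases abs_choice a with h | h <;> omega

theorem mul_entryVec_apply_self_pos {a : ℤ} {I : Fin n} (hI : ((I : ℕ) : ℤ) + 1 = |a|) :
    0 < (a : ℝ) * entryVec n a I := by
  rcases eq_or_eq_neg_of_add_one_eq_abs hI with rfl | rfl <;>
    simp only [entryVec, PiLp.toLp_apply] <;> split_ifs <;> first | omega | (push_cast; nlinarith)

theorem mul_entryVec_apply_nonneg {a c : ℤ} {I : Fin n} (hI : ((I : ℕ) : ℤ) + 1 = |a|)
    (hc : c ≠ -a) : 0 ≤ (a : ℝ) * entryVec n c I := by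
  rcases eq_or_eq_neg_of_add_one_eq_abs hI with rfl | rfl <;>
    simp only [entryVec, PiLp.toLp_apply] <;> split_ifs <;> first | omega | (push_cast; nlinarith)

theorem exists_fin_add_one_eq_abs {a : ℤ} (h₁ : 1 ≤ |a|) (h₂ : |a| ≤ n) :
    ∃ I : Fin n, ((I : ℕ) : ℤ) + 1 = |a| :=
  ⟨⟨(|a| - 1).toNat, by omega⟩, by simp only; omega⟩

end entryVec

section rowSum

variable {n : ℕ} {ι : Type*} [Fintype ι] {r : ι → ℤ} {μ : ι → ℝ} {I : Fin n}

theorem mul_sum_entryVec_apply_pos (hr : ∀ j j', r j ≠ -r j') (hμ : 0 ≤ μ) {j : ι}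
    (hj : 0 < μ j) (hI : ((I : ℕ) : ℤ) + 1 = |r j|) :
    0 < (r j : ℝ) * ∑ j', μ j' * entryVec n (r j') I := by
  rw [Finset.mul_sum]
  refine Finset.sum_pos' (fun j' _ => ?_) ⟨j, Finset.mem_univ _, ?_⟩
  · rw [mul_left_comm]
    exact mul_nonneg (hμ j') (mul_entryVec_apply_nonneg hI (hr j' j))
  · rw [mul_left_comm]
    exact mul_pos hj (mul_entryVec_apply_self_pos hI)

theorem exists_pos_of_sum_entryVec_apply_ne_zero (hμ : 0 ≤ μ)
    (h : ∑ j, μ j * entryVec n (r j) I ≠ 0) : ∃ j, 0 < μ j ∧ ((I : ℕ) : ℤ) + 1 = |r j| := by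
  obtain ⟨j, -, hj⟩ := Finset.exists_ne_zero_of_sum_ne_zero h
  refine ⟨j, (hμ j).lt_of_ne (left_ne_zero_of_mul hj).symm, ?_⟩
  by_contra hI
  exact hj (by rw [entryVec_apply_eq_zero hI, mul_zero])

end rowSum

section inducedCol

variable {n m : ℕ} {A : Fin 2 → Fin (m + 1) → ℤ}

theorem inducedCol_eq_of_ne {i i' : Fin 2} (h : i ≠ i') (b : Fin 2 → ℝ) (j : Fin (m + 1)) :
    inducedCol n m A b j = b i • entryVec n (A i j) + b i' • entryVec n (A i' j) := by
  fin_cases i <;> fin_cases i' <;> simp_all [inducedCol, add_comm]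

theorem sum_smul_inducedCol_apply {i i' : Fin 2} (h : i ≠ i') (b : Fin 2 → ℝ)
    (μ : Fin (m + 1) → ℝ) (I : Fin n) :
    (∑ j, μ j • inducedCol n m A b j) I =
      b i * ∑ j, μ j * entryVec n (A i j) I + b i' * ∑ j, μ j * entryVec n (A i' j) I := by
  simp only [inducedCol_eq_of_ne h, smul_add, WithLp.ofLp_sum, WithLp.ofLp_add,
    WithLp.ofLp_smul, Finset.sum_apply, Pi.add_apply, Pi.smul_apply, smul_eq_mul, Finset.mul_sum,
    ← Finset.sum_add_distrib]
  exact Finset.sum_congr rfl fun j _ => by ring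

end inducedCol

section sign

variable {α : Type*} [Ring α] [LinearOrder α] [IsStrictOrderedRing α] {x y : α}

theorem eq_of_abs_eq_abs_of_mul_pos (h : |x| = |y|) (hxy : 0 < x * y) : x = y := by
  rcases abs_eq_abs.mp h with h | rfl
  · exact h
  · exact absurd hxy (neg_mul y y ▸ neg_nonpos.mpr (mul_self_nonneg y)).not_gt

theorem eq_neg_of_abs_eq_abs_of_mul_neg (h : |x| = |y|) (hxy : x * y < 0) : x = -y := by
  rcases abs_eq_abs.mp h with rfl | h
  · exact absurd hxy (mul_self_nonneg x).not_gt
  · exact h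

end sign

section validity

variable {n m : ℕ} {A : Fin 2 → Fin (m + 1) → ℤ}

theorem not_isValid_of_sum_inducedCol_eq_zero {b : Fin 2 → ℝ} (hb : b ≠ 0) {ι : Type*}
    [Fintype ι] [Nonempty ι] (j : ι → Fin (m + 1)) (h : ∑ k, inducedCol n m A b (j k) = 0) :
    ¬ IsValid n m A := fun hV =>
  hV b hb <| convexHull_mono (range_comp_subset_range j _)
    (zero_mem_convexHull_range_of_sum_eq_zero h)

theorem not_isValid_of_eq_neg (i : Fin 2) (j₁ j₂ : Fin (m + 1)) (h : A i j₁ = -A i j₂) :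
    ¬ IsValid n m A := by
  obtain ⟨i', hi'⟩ := exists_ne i
  refine not_isValid_of_sum_inducedCol_eq_zero (b := Pi.single i 1) (by simp) ![j₁, j₂] ?_
  simp [inducedCol_eq_of_ne hi'.symm, Pi.single_eq_of_ne hi', h, entryVec_neg]

theorem not_isValid_of_smul_entryVec_cycle {i₀ i₁ : Fin 2} (h : i₀ ≠ i₁) (t : ℝ) {p : ℕ}
    (j : Fin (p + 1) → Fin (m + 1))
    (hj : ∀ k, t • entryVec n (A i₁ (j k)) = entryVec n (A i₀ (j (k + 1)))) :
    ¬ IsValid n m A := by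
  set b : Fin 2 → ℝ := Pi.single i₀ 1 - Pi.single i₁ t
  have hb₀ : b i₀ = 1 := by simp [b, h.symm]
  refine not_isValid_of_sum_inducedCol_eq_zero (b := b) (ne_of_apply_ne (· i₀) (by simp [hb₀]))
    j ?_
  have hb₁ : b i₁ = -t := by simp [b, h]
  simp only [inducedCol_eq_of_ne h, hb₀, hb₁, one_smul, neg_smul, ← sub_eq_add_neg, hj,
    Finset.sum_sub_distrib]
  rw [sub_eq_zero]
  exact (Equiv.sum_comp (Equiv.addRight 1) fun k => entryVec n (A i₀ (j k))).symm

theorem exists_partner_column (hA : ∀ i j, 1 ≤ |A i j| ∧ |A i j| ≤ n)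
    (hpair : ∀ i j j', A i j ≠ -A i j') {b : Fin 2 → ℝ} {μ : Fin (m + 1) → ℝ} (hμ : 0 ≤ μ)
    (hzero : ∑ j, μ j • inducedCol n m A b j = 0) {i i' : Fin 2} (hii' : i ≠ i')
    {j : Fin (m + 1)} (hj : 0 < μ j) (hb : b i ≠ 0) :
    ∃ j', 0 < μ j' ∧ |A i' j'| = |A i j| ∧ (A i j * A i' j' : ℝ) * (b i * b i') < 0 := by
  obtain ⟨I, hI⟩ := exists_fin_add_one_eq_abs (hA i j).1 (hA i j).2
  set c : Fin 2 → ℝ := fun k => ∑ j, μ j * entryVec n (A k j) I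
  have hci : 0 < A i j * c i := mul_sum_entryVec_apply_pos (hpair i) hμ hj hI
  have hbalance : b i * c i + b i' * c i' = 0 := by
    rw [← sum_smul_inducedCol_apply hii', hzero]
    rfl
  have hbci : b i * c i ≠ 0 := mul_ne_zero hb (right_ne_zero_of_mul hci.ne')
  have hci' : c i' ≠ 0 := by
    intro h0
    rw [h0, mul_zero, add_zero] at hbalance
    exact hbci hbalance
  obtain ⟨j', hj', hI'⟩ := exists_pos_of_sum_entryVec_apply_ne_zero hμ hci'
  have hci'' : 0 < A i' j' * c i' := mul_sum_entryVec_apply_pos (hpair i') hμ hj' hI'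
  refine ⟨j', hj', hI'.symm.trans hI, ?_⟩
  have : (A i j * A i' j' * (b i * b i')) * (c i * c i') ^ 2 < 0 :=
    calc (A i j * A i' j' * (b i * b i')) * (c i * c i') ^ 2
        = (A i j * c i) * (A i' j' * c i') * ((b i * c i) * (b i' * c i')) := by ring
      _ = -((A i j * c i) * (A i' j' * c i') * (b i * c i) ^ 2) := by
        rw [eq_neg_of_add_eq_zero_right hbalance]; ring
      _ < 0 := neg_neg_of_pos (mul_pos (mul_pos hci hci'') (sq_pos_of_ne_zero hbci))
  exact neg_of_mul_neg_left this (sq_nonneg _)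

theorem isValid_of_not_hasCircuit_of_not_hasAntiCircuit
    (hA : ∀ i j, 1 ≤ |A i j| ∧ |A i j| ≤ n) (hpair : ∀ i j j', A i j ≠ -A i j')
    (hcirc : ¬ HasCircuit A) (hanti : ¬ HasAntiCircuit A) : IsValid n m A := by
  intro b hb h0
  obtain ⟨μ, hμ, hμ₁, hzero⟩ := exists_weights_of_mem_convexHull_range h0
  obtain ⟨j₀, -, hj₀⟩ :=
    Finset.exists_lt_of_sum_lt (s := .univ) (f := 0) (g := μ) (by simp [hμ₁])
  have hb₁ : b 1 ≠ 0 := by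
    intro hb₁
    have hb₀ : b 0 ≠ 0 := fun hb₀ => hb (funext fun i => by fin_cases i <;> assumption)
    obtain ⟨_, _, _, hneg⟩ :=
      exists_partner_column hA hpair hμ hzero (i' := 1) (by decide) hj₀ hb₀
    simp [hb₁] at hneg
  have hstep := fun j (hj : 0 < μ j) =>
    exists_partner_column hA hpair hμ hzero (i' := 0) (by decide) hj hb₁
  have hb₁₀ : b 1 * b 0 ≠ 0 := by
    obtain ⟨_, _, _, hneg⟩ := hstep j₀ hj₀
    exact right_ne_zero_of_mul hneg.ne
  rcases hb₁₀.lt_or_gt with hneg | hpos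
  · refine hcirc ⟨0, 1, by decide, exists_injective_cycle (P := fun j => 0 < μ j)
      (R := fun j j' => A 1 j = A 0 j') (fun j hj => ?_) hj₀⟩
    obtain ⟨j', hj', habs, hsign⟩ := hstep j hj
    refine ⟨j', hj', eq_of_abs_eq_abs_of_mul_pos habs.symm ?_⟩
    exact_mod_cast pos_of_mul_neg_left hsign hneg.le
  · refine hanti ⟨0, 1, by decide, exists_injective_cycle (P := fun j => 0 < μ j)
      (R := fun j j' => A 1 j = -A 0 j') (fun j hj => ?_) hj₀⟩
    obtain ⟨j', hj', habs, hsign⟩ := hstep j hj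
    refine ⟨j', hj', eq_neg_of_abs_eq_abs_of_mul_neg habs.symm ?_⟩
    exact_mod_cast neg_of_mul_neg_left hsign hpos.le

end validity

theorem stmt12_general (n m : ℕ) (A : Fin 2 → Fin (m + 1) → ℤ)
    (hA : ∀ i j, 1 ≤ |A i j| ∧ |A i j| ≤ (n : ℤ)) :
    ¬ IsValid n m A ↔
      ((∃ i : Fin 2, ∃ j₁ j₂ : Fin (m + 1), A i j₁ = -(A i j₂)) ∨
        HasCircuit A ∨ HasAntiCircuit A) := by
  constructor
  · intro hinvalid
    by_contra! h
    exact hinvalid (isValid_of_not_hasCircuit_of_not_hasAntiCircuit hA h.1 h.2.1 h.2.2)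
  · rintro (⟨i, j₁, j₂, h⟩ | ⟨i₀, i₁, h, p, j, -, hj⟩ | ⟨i₀, i₁, h, p, j, -, hj⟩)
    · exact not_isValid_of_eq_neg i j₁ j₂ h
    · exact not_isValid_of_smul_entryVec_cycle h 1 j fun k => by rw [one_smul, hj]
    · exact not_isValid_of_smul_entryVec_cycle h (-1) j fun k => by
        rw [neg_one_smul, hj, entryVec_neg, neg_neg]

/-- a `2 × (m+1)` matrix with entries in `{±1,…,±n}` and distinct
columns is invalid if and only if (1) one of its rows contains both `α` and `−α` for
some `α ∈ {1,…,n}`, or (2) it contains a circuit or an anti-circuit. -/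
theorem stmt12 (n m : ℕ) (A : Fin 2 → Fin (m + 1) → ℤ)
    (hA : ∀ i j, 1 ≤ |A i j| ∧ |A i j| ≤ (n : ℤ))
    (hcol : Function.Injective (fun j => fun i => A i j)) :
    ¬ IsValid n m A ↔
      ((∃ i : Fin 2, ∃ j₁ j₂ : Fin (m + 1), A i j₁ = -(A i j₂)) ∨
        HasCircuit A ∨ HasAntiCircuit A) :=
  stmt12_general n m A hA
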